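/- For α < −1 and ξ ≠ 0, exactly one of the two functions exp(±ξ x^(1+α)/(1+α)) diverges to +∞ as x → 0⁺ (namely the one with sign matching −sign(ξ(1+α))), and consequently it is not the case that both solutions belong to L²((0,1), x^(−α) dx). -/

import Mathlib

/-!
Write the exponents as `±c t` with `c = ξ / (1 + α) ≠ 0` and `t = x ^ (1 + α)`, which tends to `+∞`
as `x → 0⁺`; exactly one of `exp (±c t)` then tends to `+∞`. For that one, `exp (2 |c| t)` outgrows
every power of `t`, so its squared weighted integrand dominates `x⁻¹` near `0`.
-/

open Real Set MeasureTheory Filter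

open scoped Topology

theorem tendsto_exp_mul_rpow_nhdsGT_zero_atTop_iff {p c : ℝ} (hp : p < 0) :
    Tendsto (fun x : ℝ => exp (c * x ^ p)) (𝓝[>] 0) atTop ↔ 0 < c := by
  refine ⟨fun h => ?_, fun hc => ?_⟩
  · by_contra! hc
    have hbounded : ∀ᶠ x in 𝓝[>] (0 : ℝ), exp (c * x ^ p) ≤ 1 := by
      filter_upwards [self_mem_nhdsWithin] with x (hx : 0 < x)
      exact exp_le_one_iff.2 (mul_nonpos_of_nonpos_of_nonneg hc (rpow_pos_of_pos hx p).le)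
    obtain ⟨x, hx_gt, hx_le⟩ := ((h.eventually_gt_atTop 1).and hbounded).exists
    linarith
  · exact tendsto_exp_atTop.comp ((tendsto_rpow_neg_nhdsGT_zero hp).const_mul_atTop hc)

/-- Substituting `t = x ^ p → ∞`, this is `t ^ (r / p) ≤ exp (c t)` for large `t`. -/
theorem eventually_rpow_le_exp_mul_rpow_nhdsGT_zero {p c : ℝ} (hp : p < 0) (hc : 0 < c)
    (r : ℝ) : ∀ᶠ x in 𝓝[>] (0 : ℝ), x ^ r ≤ exp (c * x ^ p) := by
  have hlarge : ∀ᶠ t in atTop, t ^ (r / p) ≤ exp (c * t) := by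
    filter_upwards [(tendsto_exp_mul_div_rpow_atTop (r / p) c hc).eventually_ge_atTop 1,
      eventually_gt_atTop 0] with t ht ht₀
    rwa [le_div_iff₀ (rpow_pos_of_pos ht₀ _), one_mul] at ht
  filter_upwards [(tendsto_rpow_neg_nhdsGT_zero hp).eventually hlarge, self_mem_nhdsWithin]
    with x hx (hx₀ : 0 < x)
  rwa [← rpow_mul hx₀.le, mul_div_cancel₀ _ hp.ne] at hx

theorem not_integrableOn_Ioo_zero_of_eventually_inv_le {f : ℝ → ℝ} {b : ℝ} (hb : 0 < b)
    (hf : ∀ᶠ x in 𝓝[>] (0 : ℝ), x⁻¹ ≤ f x) : ¬ IntegrableOn f (Ioo 0 b) := by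
  intro hint
  obtain ⟨ε, hε, hsub⟩ := mem_nhdsGT_iff_exists_Ioo_subset.mp hf
  have hδ : 0 < min ε b := lt_min hε hb
  have hinv : IntegrableOn (fun x : ℝ => x ^ (-1 : ℝ)) (Ioo 0 (min ε b)) := by
    refine Integrable.mono (hint.mono_set (Ioo_subset_Ioo_right (min_le_right _ _)))
      (by fun_prop) ((ae_restrict_iff' measurableSet_Ioo).2 (ae_of_all _ fun x hx => ?_))
    have hx₀ : 0 < x ^ (-1 : ℝ) := rpow_pos_of_pos hx.1 _
    have hle : x⁻¹ ≤ f x := hsub ⟨hx.1, hx.2.trans_le (min_le_left _ _)⟩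
    rw [rpow_neg_one] at hx₀ ⊢
    rw [norm_of_nonneg hx₀.le, norm_of_nonneg (hx₀.le.trans hle)]
    exact hle
  exact lt_irrefl _ ((intervalIntegral.integrableOn_Ioo_rpow_iff hδ).1 hinv)

theorem not_integrableOn_Ioo_zero_exp_mul_rpow_mul_rpow {p c : ℝ} (hp : p < 0) (hc : 0 < c)
    (q : ℝ) {b : ℝ} (hb : 0 < b) :
    ¬ IntegrableOn (fun x : ℝ => exp (c * x ^ p) * x ^ q) (Ioo 0 b) := by
  refine not_integrableOn_Ioo_zero_of_eventually_inv_le hb ?_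
  filter_upwards [eventually_rpow_le_exp_mul_rpow_nhdsGT_zero hp hc (-1 - q), self_mem_nhdsWithin]
    with x hx (hx₀ : 0 < x)
  calc x⁻¹ = x ^ (-1 - q) * x ^ q := by rw [← rpow_add hx₀, sub_add_cancel, rpow_neg_one]
    _ ≤ exp (c * x ^ p) * x ^ q := by gcongr

/-- For `α < −1`, `ξ ≠ 0`, exactly one of the two functions `exp(±ξ x^(1+α)/(1+α))`
diverges to `+∞` as `x → 0⁺`, and consequently it is not the case that both solutions
belong to `L²((0,1), x^(−α) dx)`: at least one of the integrals
`∫₀¹ exp(±2ξ x^(1+α)/(1+α)) x^(−α) dx` diverges. -/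
theorem exp_blowup_at_zero (α ξ : ℝ) (hα : α < -1) (hξ : ξ ≠ 0) :
    Xor'
      (Tendsto (fun x : ℝ => Real.exp (ξ * x ^ (1 + α) / (1 + α)))
        (nhdsWithin 0 (Ioi 0)) atTop)
      (Tendsto (fun x : ℝ => Real.exp (-(ξ * x ^ (1 + α) / (1 + α))))
        (nhdsWithin 0 (Ioi 0)) atTop) ∧
    ¬ (IntegrableOn
        (fun x : ℝ => (Real.exp (ξ * x ^ (1 + α) / (1 + α))) ^ 2 * x ^ (-α)) (Ioo 0 1) ∧
       IntegrableOn
        (fun x : ℝ => (Real.exp (-(ξ * x ^ (1 + α) / (1 + α)))) ^ 2 * x ^ (-α)) (Ioo 0 1)) := by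
  have hp : 1 + α < 0 := by linarith
  have hc : ξ / (1 + α) ≠ 0 := div_ne_zero hξ hp.ne
  have hform (x : ℝ) : ξ * x ^ (1 + α) / (1 + α) = ξ / (1 + α) * x ^ (1 + α) := by ring
  have hsq (y : ℝ) : exp y ^ 2 = exp (2 * y) := by rw [← exp_nat_mul]; norm_num
  simp only [hform, ← neg_mul, hsq, ← mul_assoc, tendsto_exp_mul_rpow_nhdsGT_zero_atTop_iff hp]
  rcases hc.lt_or_gt with hneg | hpos
  · exact ⟨Or.inr ⟨neg_pos.2 hneg, hneg.not_gt⟩, fun h =>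
      not_integrableOn_Ioo_zero_exp_mul_rpow_mul_rpow hp (by linarith) _ one_pos h.2⟩
  · exact ⟨Or.inl ⟨hpos, by linarith⟩, fun h =>
      not_integrableOn_Ioo_zero_exp_mul_rpow_mul_rpow hp (by linarith) _ one_pos h.1⟩
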